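/- Fix a real n×n matrix B, an integer N ≥ 1, and real m×n matrices f_t and b_t for t = 1, …, N. Define E(A, B) = Σ_{t=1}^{N} ( ‖f_t − A b_t Bᵀ‖_F² + ‖b_t − A f_t Bᵀ‖_F² ), M = Σ_{t=1}^{N} [ (B b_tᵀ)ᵀ (B b_tᵀ) + (B f_tᵀ)ᵀ (B f_tᵀ) ] and N₀ = Σ_{t=1}^{N} [ f_t B b_tᵀ + b_t B f_tᵀ ]. If a real m×m matrix A* satisfies A* M = N₀, then E(A*, B) ≤ E(A, B) for every real m×m matrix A. In particular, if M is invertible, then A* = N₀ M⁻¹ is a global minimizer of A ↦ E(A, B). -/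

import Mathlib

open Matrix

/-- Frobenius norm of a real matrix. -/
noncomputable def frobNorm {p q : ℕ} (M : Matrix (Fin p) (Fin q) ℝ) : ℝ :=
  Real.sqrt (∑ i, ∑ j, M i j ^ 2)

/-- The Burg-type total prediction error `E(A, B)`. -/
noncomputable def burgE {m n N : ℕ} (f b : Fin N → Matrix (Fin m) (Fin n) ℝ)
    (A : Matrix (Fin m) (Fin m) ℝ) (B : Matrix (Fin n) (Fin n) ℝ) : ℝ :=
  ∑ t, (frobNorm (f t - A * b t * Bᵀ) ^ 2 + frobNorm (b t - A * f t * Bᵀ) ^ 2)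

/-- `M = Σ_t [(B b_tᵀ)ᵀ (B b_tᵀ) + (B f_tᵀ)ᵀ (B f_tᵀ)]`. -/
def burgM {m n N : ℕ} (B : Matrix (Fin n) (Fin n) ℝ)
    (f b : Fin N → Matrix (Fin m) (Fin n) ℝ) : Matrix (Fin m) (Fin m) ℝ :=
  ∑ t, ((B * (b t)ᵀ)ᵀ * (B * (b t)ᵀ) + (B * (f t)ᵀ)ᵀ * (B * (f t)ᵀ))

/-- `N₀ = Σ_t [f_t B b_tᵀ + b_t B f_tᵀ]`. -/
def burgN {m n N : ℕ} (B : Matrix (Fin n) (Fin n) ℝ)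
    (f b : Fin N → Matrix (Fin m) (Fin n) ℝ) : Matrix (Fin m) (Fin m) ℝ :=
  ∑ t, (f t * B * (b t)ᵀ + b t * B * (f t)ᵀ)

/-!
Writing `A = A₀ + D`, each residual `R - A X` becomes `(R - A₀ X) - D X`, so the total squared
error at `A` is the error at `A₀`, minus twice the cross term `tr ((Σ (R - A₀ X) Xᵀ) Dᵀ)`, plus
the nonnegative `Σ ‖D X‖²`. The normal equations `A₀ (Σ X Xᵀ) = Σ R Xᵀ` make the cross term
vanish. The Burg error is such a sum over the `2N` residuals `f_t - A (b_t Bᵀ)` and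
`b_t - A (f_t Bᵀ)`, whose normal equations are `A₀ M = N₀`.
-/

section LeastSquares

variable {ι m n p : Type*} [Fintype ι] [Fintype m] [Fintype n] [Fintype p]

lemma trace_mul_transpose_self (M : Matrix m n ℝ) : trace (M * Mᵀ) = ∑ i, ∑ j, M i j ^ 2 := by
  simp only [trace, diag_apply, mul_apply, transpose_apply, sq]

lemma trace_mul_transpose_self_nonneg (M : Matrix m n ℝ) : 0 ≤ trace (M * Mᵀ) := by
  rw [trace_mul_transpose_self]
  positivity

lemma trace_mul_transpose_sub_self (R S : Matrix m n ℝ) :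
    trace ((R - S) * (R - S)ᵀ) = trace (R * Rᵀ) - 2 * trace (R * Sᵀ) + trace (S * Sᵀ) := by
  have hswap : trace (S * Rᵀ) = trace (R * Sᵀ) := by
    rw [← trace_transpose (R * Sᵀ), transpose_mul, transpose_transpose]
  simp only [transpose_sub, Matrix.sub_mul, Matrix.mul_sub, trace_sub, hswap]
  ring

theorem sum_trace_residual_le_of_mul_eq (R : ι → Matrix m n ℝ) (X : ι → Matrix p n ℝ)
    {A₀ : Matrix m p ℝ} (hA₀ : A₀ * ∑ i, X i * (X i)ᵀ = ∑ i, R i * (X i)ᵀ) (A : Matrix m p ℝ) :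
    ∑ i, trace ((R i - A₀ * X i) * (R i - A₀ * X i)ᵀ) ≤
      ∑ i, trace ((R i - A * X i) * (R i - A * X i)ᵀ) := by
  set D := A - A₀
  have hsplit : ∀ i, R i - A * X i = (R i - A₀ * X i) - D * X i := fun i => by
    rw [Matrix.sub_mul]
    abel
  have hcross : ∑ i, trace ((R i - A₀ * X i) * (D * X i)ᵀ) = 0 := by
    calc ∑ i, trace ((R i - A₀ * X i) * (D * X i)ᵀ)
        = trace ((∑ i, (R i - A₀ * X i) * (X i)ᵀ) * Dᵀ) := by
          simp only [transpose_mul, Matrix.sum_mul, trace_sum, Matrix.mul_assoc]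
      _ = trace ((∑ i, R i * (X i)ᵀ - A₀ * ∑ i, X i * (X i)ᵀ) * Dᵀ) := by
          simp only [Matrix.sub_mul, Finset.sum_sub_distrib, Matrix.mul_sum, Matrix.mul_assoc]
      _ = 0 := by rw [hA₀, sub_self, Matrix.zero_mul, trace_zero]
  have hquad : 0 ≤ ∑ i, trace (D * X i * (D * X i)ᵀ) :=
    Finset.sum_nonneg fun i _ => trace_mul_transpose_self_nonneg _
  simp only [hsplit, trace_mul_transpose_sub_self, Finset.sum_add_distrib, Finset.sum_sub_distrib,
    ← Finset.mul_sum, hcross]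
  linarith

end LeastSquares

lemma frobNorm_sq {p q : ℕ} (M : Matrix (Fin p) (Fin q) ℝ) : frobNorm M ^ 2 = trace (M * Mᵀ) := by
  rw [frobNorm, Real.sq_sqrt (by positivity), trace_mul_transpose_self]

def burgRegressor {m n N : ℕ} (f b : Fin N → Matrix (Fin m) (Fin n) ℝ)
    (B : Matrix (Fin n) (Fin n) ℝ) : Fin N ⊕ Fin N → Matrix (Fin m) (Fin n) ℝ :=
  Sum.elim (fun t => b t * Bᵀ) (fun t => f t * Bᵀ)

lemma burgE_eq_sum_trace {m n N : ℕ} (f b : Fin N → Matrix (Fin m) (Fin n) ℝ)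
    (A : Matrix (Fin m) (Fin m) ℝ) (B : Matrix (Fin n) (Fin n) ℝ) :
    burgE f b A B = ∑ i, trace ((Sum.elim f b i - A * burgRegressor f b B i) *
      (Sum.elim f b i - A * burgRegressor f b B i)ᵀ) := by
  simp only [burgE, frobNorm_sq, Fintype.sum_sum_type, burgRegressor, Sum.elim_inl, Sum.elim_inr,
    Finset.sum_add_distrib, Matrix.mul_assoc]

lemma sum_burgRegressor_mul_transpose {m n N : ℕ} (f b : Fin N → Matrix (Fin m) (Fin n) ℝ)
    (B : Matrix (Fin n) (Fin n) ℝ) :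
    ∑ i, burgRegressor f b B i * (burgRegressor f b B i)ᵀ = burgM B f b := by
  simp only [burgM, Fintype.sum_sum_type, burgRegressor, Sum.elim_inl, Sum.elim_inr,
    Finset.sum_add_distrib, transpose_mul, transpose_transpose, Matrix.mul_assoc]

lemma sum_mul_burgRegressor_transpose {m n N : ℕ} (f b : Fin N → Matrix (Fin m) (Fin n) ℝ)
    (B : Matrix (Fin n) (Fin n) ℝ) :
    ∑ i, Sum.elim f b i * (burgRegressor f b B i)ᵀ = burgN B f b := by
  simp only [burgN, Fintype.sum_sum_type, burgRegressor, Sum.elim_inl, Sum.elim_inr,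
    Finset.sum_add_distrib, transpose_mul, transpose_transpose, Matrix.mul_assoc]

theorem burgE_le_of_mul_burgM_eq {m n N : ℕ} (B : Matrix (Fin n) (Fin n) ℝ)
    (f b : Fin N → Matrix (Fin m) (Fin n) ℝ) {A₀ : Matrix (Fin m) (Fin m) ℝ}
    (hA₀ : A₀ * burgM B f b = burgN B f b) (A : Matrix (Fin m) (Fin m) ℝ) :
    burgE f b A₀ B ≤ burgE f b A B := by
  rw [burgE_eq_sum_trace, burgE_eq_sum_trace]
  refine sum_trace_residual_le_of_mul_eq _ _ ?_ A
  rwa [sum_burgRegressor_mul_transpose, sum_mul_burgRegressor_transpose]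

theorem stmt14_general (m n N : ℕ) (B : Matrix (Fin n) (Fin n) ℝ)
    (f b : Fin N → Matrix (Fin m) (Fin n) ℝ) :
    (∀ Astar : Matrix (Fin m) (Fin m) ℝ,
      Astar * burgM B f b = burgN B f b →
        ∀ A : Matrix (Fin m) (Fin m) ℝ, burgE f b Astar B ≤ burgE f b A B) ∧
    (IsUnit (burgM B f b) →
      ∀ A : Matrix (Fin m) (Fin m) ℝ,
        burgE f b (burgN B f b * (burgM B f b)⁻¹) B ≤ burgE f b A B) := by
  refine ⟨fun _ hA₀ => burgE_le_of_mul_burgM_eq B f b hA₀, fun hM => ?_⟩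
  exact burgE_le_of_mul_burgM_eq B f b
    (nonsing_inv_mul_cancel_right _ _ ((isUnit_iff_isUnit_det _).mp hM))

theorem stmt14 (m n N : ℕ) (hN : 1 ≤ N) (B : Matrix (Fin n) (Fin n) ℝ)
    (f b : Fin N → Matrix (Fin m) (Fin n) ℝ) :
    (∀ Astar : Matrix (Fin m) (Fin m) ℝ,
      Astar * burgM B f b = burgN B f b →
        ∀ A : Matrix (Fin m) (Fin m) ℝ, burgE f b Astar B ≤ burgE f b A B) ∧
    (IsUnit (burgM B f b) →
      ∀ A : Matrix (Fin m) (Fin m) ℝ,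
        burgE f b (burgN B f b * (burgM B f b)⁻¹) B ≤ burgE f b A B) :=
  stmt14_general m n N B f b
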